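/- arXiv:1409.1025 — 5 statements merged into one kernel-verified Lean document; each statement's English description precedes it below -/
import Mathlib

section
/- With m, s, Λ as above, if 1/μ₂ > 1/μ₁ (so m ≥ 0) and σ₂²/μ₂³ > σ₁²/μ₁³ (so s² is increasing on [c-h, c+h]), then Λ is strictly increasing and concave on [c - h, c], and strictly decreasing and convex on [c, c + h]. -/
/-! On `[c - h, c + h]` the variance `s²` is an increasing affine function `x` of `t`, and on
each half of that interval `m` is affine in `x` too, so `Λ = (p + q x) / √x = p / √x + q √x`.
On the left half `p < 0 < q`, making `Λ` a sum of the increasing concave functions `p x^(-1/2)`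
and `q √x`; on the right half `Λ` is the negative of such a function. Precomposing with the
increasing affine map `t ↦ x` preserves these properties. -/

open Set Real

lemma convexOn_inv_sqrt : ConvexOn ℝ (Ioi 0) fun x : ℝ => (√x)⁻¹ := by
  have himage : sqrt '' Ioi 0 = Ioi 0 := by
    ext y
    refine ⟨?_, fun hy => ⟨y ^ 2, mem_Ioi.2 (pow_pos hy 2), sqrt_sq hy.le⟩⟩
    rintro ⟨x, hx, rfl⟩
    exact sqrt_pos.2 hx
  have hinv : ConvexOn ℝ (Ioi 0) fun y : ℝ => y⁻¹ := by
    simpa using convexOn_zpow (𝕜 := ℝ) (-1)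
  have hsqrt : ConcaveOn ℝ (Ioi 0) sqrt :=
    strictConcaveOn_sqrt.concaveOn.subset Ioi_subset_Ici_self (convex_Ioi 0)
  rw [← himage] at hinv
  refine hinv.comp_concaveOn hsqrt ?_
  rw [himage]
  exact antitoneOn_inv_pos

lemma add_div_sqrt (p q x : ℝ) : (p + q * x) / √x = p / √x + q * √x := by
  rw [add_div, mul_div_assoc, div_sqrt]

section DivSqrtAddMulSqrt

variable {p q : ℝ}

lemma concaveOn_div_sqrt_add_mul_sqrt (hp : p ≤ 0) (hq : 0 ≤ q) :
    ConcaveOn ℝ (Ioi 0) fun x => p / √x + q * √x := by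
  have hsqrt : ConcaveOn ℝ (Ioi 0) sqrt :=
    strictConcaveOn_sqrt.concaveOn.subset Ioi_subset_Ici_self (convex_Ioi 0)
  refine ((convexOn_inv_sqrt.smul (neg_nonneg.2 hp)).neg.add (hsqrt.smul hq)).congr ?_
  intro x _
  simp only [Pi.add_apply, Pi.neg_apply, smul_eq_mul]
  ring

lemma strictMonoOn_div_sqrt_add_mul_sqrt (hp : p < 0) (hq : 0 ≤ q) :
    StrictMonoOn (fun x => p / √x + q * √x) (Ioi 0) := by
  intro x hx y _ hxy
  have hsqrt : √x < √y := sqrt_lt_sqrt (le_of_lt hx) hxy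
  have hinv : -p / √y < -p / √x :=
    div_lt_div_of_pos_left (neg_pos.2 hp) (sqrt_pos.2 hx) hsqrt
  have : q * √x ≤ q * √y := mul_le_mul_of_nonneg_left hsqrt.le hq
  simp only [neg_div] at hinv ⊢
  linarith

end DivSqrtAddMulSqrt

section AffineComp

variable {s I : Set ℝ} {f : ℝ → ℝ} {a b : ℝ}

lemma ConcaveOn.comp_add_mul (hf : ConcaveOn ℝ s f) (hI : Convex ℝ I)
    (hmaps : MapsTo (fun t => a + b * t) I s) : ConcaveOn ℝ I fun t => f (a + b * t) := by
  refine ((hf.comp_affineMap (AffineMap.lineMap a (a + b))).subset ?_ hI).congr ?_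
  · intro t ht
    simpa [AffineMap.lineMap_apply_ring', add_comm, mul_comm] using hmaps ht
  · intro t _
    simp [AffineMap.lineMap_apply_ring', add_comm, mul_comm]

lemma StrictMonoOn.comp_add_mul (hf : StrictMonoOn f s) (hb : 0 < b)
    (hmaps : MapsTo (fun t => a + b * t) I s) : StrictMonoOn (fun t => f (a + b * t)) I :=
  hf.comp ((strictMono_mul_left_of_pos hb).const_add a |>.strictMonoOn I) hmaps

end AffineComp

section DivSqrtAffine

variable {Λ : ℝ → ℝ} {I : Set ℝ} {a b p q : ℝ}

lemma strictMonoOn_concaveOn_of_eqOn_div_sqrt (hI : Convex ℝ I) (hb : 0 < b)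
    (hpos : MapsTo (fun t => a + b * t) I (Ioi 0)) (hp : p < 0) (hq : 0 ≤ q)
    (hΛ : EqOn Λ (fun t => (p + q * (a + b * t)) / √(a + b * t)) I) :
    StrictMonoOn Λ I ∧ ConcaveOn ℝ I Λ := by
  simp only [add_div_sqrt] at hΛ
  exact ⟨((strictMonoOn_div_sqrt_add_mul_sqrt hp hq).comp_add_mul hb hpos).congr hΛ.symm,
    ((concaveOn_div_sqrt_add_mul_sqrt hp.le hq).comp_add_mul hI hpos).congr hΛ.symm⟩

lemma strictAntiOn_convexOn_of_eqOn_div_sqrt (hI : Convex ℝ I) (hb : 0 < b)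
    (hpos : MapsTo (fun t => a + b * t) I (Ioi 0)) (hp : 0 < p) (hq : q ≤ 0)
    (hΛ : EqOn Λ (fun t => (p + q * (a + b * t)) / √(a + b * t)) I) :
    StrictAntiOn Λ I ∧ ConvexOn ℝ I Λ := by
  have hneg : EqOn (fun t => -Λ t) (fun t => (-p + -q * (a + b * t)) / √(a + b * t)) I := by
    intro t ht
    simp only [hΛ ht]
    ring
  obtain ⟨hmono, hconc⟩ :=
    strictMonoOn_concaveOn_of_eqOn_div_sqrt hI hb hpos (neg_neg_of_pos hp) (neg_nonneg.2 hq) hneg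
  exact ⟨by simpa using hmono.neg, hconc.neg.congr fun t _ => neg_neg (Λ t)⟩

end DivSqrtAffine

theorem sharkFin_west_general
    (T c h μ₁ μ₂ v₁ v₂ : ℝ)
    (hh : h ∈ Set.Ioc 0 (T / 2))
    (hμ₁ : 0 < μ₁) (hv₁ : 0 < v₁)
    (hrate : 1 / μ₂ > 1 / μ₁)
    (hvar : v₂ / μ₂ ^ 3 > v₁ / μ₁ ^ 3)
    (m s2 Λ : ℝ → ℝ)
    (hm : ∀ t, m t = if |t - c| ≤ h then (1 / μ₂ - 1 / μ₁) * (h - |t - c|) else 0)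
    (hs2 : ∀ t, s2 t =
      if t ≤ c - h then 2 * h * v₁ / μ₁ ^ 3
      else if c + h ≤ t then 2 * h * v₂ / μ₂ ^ 3
      else (t + h - c) * v₂ / μ₂ ^ 3 + (c - (t - h)) * v₁ / μ₁ ^ 3)
    (hΛ : ∀ t, Λ t = m t / Real.sqrt (s2 t)) :
    StrictMonoOn Λ (Set.Icc (c - h) c) ∧ ConcaveOn ℝ (Set.Icc (c - h) c) Λ ∧
      StrictAntiOn Λ (Set.Icc c (c + h)) ∧ ConvexOn ℝ (Set.Icc c (c + h)) Λ := by
  set A := 1 / μ₂ - 1 / μ₁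
  set B := v₂ / μ₂ ^ 3
  set C := v₁ / μ₁ ^ 3
  obtain ⟨hh, -⟩ := hh
  have hC : 0 < C := by positivity
  have hD : 0 < B - C := sub_pos.2 hvar
  set r := A / (B - C)
  have hr : 0 < r := div_pos (sub_pos.2 hrate) hD
  set a := h * (B + C) - (B - C) * c with ha
  have hs2_affine : EqOn s2 (fun t => a + (B - C) * t) (Icc (c - h) (c + h)) := by
    intro t ht
    rw [hs2 t]
    split_ifs with h₁ h₂
    · rw [le_antisymm h₁ ht.1]; ring
    · rw [le_antisymm ht.2 h₂]; ring
    · ring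
  have hpos : MapsTo (fun t => a + (B - C) * t) (Ici (c - h)) (Ioi 0) := fun t ht => by
    have : 0 ≤ (B - C) * (t - (c - h)) := mul_nonneg hD.le (sub_nonneg.2 ht)
    simp only [mem_Ioi]
    linarith [mul_pos hh hC]
  have hleft : EqOn Λ (fun t => (-(2 * h * C * r) + r * (a + (B - C) * t))
      / √(a + (B - C) * t)) (Icc (c - h) c) := by
    intro t ht
    rw [hΛ, hm, abs_of_nonpos (sub_nonpos.2 ht.2), if_pos (show -(t - c) ≤ h by linarith [ht.1]),
      hs2_affine ⟨ht.1, by linarith [ht.2]⟩]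
    simp only [r]
    field_simp
    ring
  have hright : EqOn Λ (fun t => (2 * h * B * r + -r * (a + (B - C) * t))
      / √(a + (B - C) * t)) (Icc c (c + h)) := by
    intro t ht
    rw [hΛ, hm, abs_of_nonneg (sub_nonneg.2 ht.1), if_pos (show t - c ≤ h by linarith [ht.2]),
      hs2_affine ⟨by linarith [ht.1], ht.2⟩]
    simp only [r]
    field_simp
    ring
  obtain ⟨hmono, hconc⟩ := strictMonoOn_concaveOn_of_eqOn_div_sqrt (convex_Icc _ _) hD
    (hpos.mono_left fun t ht => ht.1) (by have := mul_pos (mul_pos hh hC) hr; linarith) hr.le hleft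
  obtain ⟨hanti, hconv⟩ := strictAntiOn_convexOn_of_eqOn_div_sqrt (convex_Icc _ _) hD
    (hpos.mono_left fun t ht => le_trans (by linarith) ht.1)
    (mul_pos (mul_pos (mul_pos two_pos hh) (hC.trans hvar)) hr) (neg_nonpos.2 hr.le) hright
  exact ⟨hmono, hconc, hanti, hconv⟩

/-- Shark heading west: for m ≥ 0 and s² increasing, Λ is strictly increasing and concave
on [c-h, c], and strictly decreasing and convex on [c, c+h]. -/
theorem sharkFin_west
    (T c h μ₁ μ₂ v₁ v₂ : ℝ)
    (hT : 0 < T) (hc : c ∈ Set.Ioo 0 T) (hh : h ∈ Set.Ioc 0 (T / 2))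
    (hμ₁ : 0 < μ₁) (hμ₂ : 0 < μ₂) (hv₁ : 0 < v₁) (hv₂ : 0 < v₂)
    (hμne : μ₁ ≠ μ₂)
    (hrate : 1 / μ₂ > 1 / μ₁)
    (hvar : v₂ / μ₂ ^ 3 > v₁ / μ₁ ^ 3)
    (m s2 Λ : ℝ → ℝ)
    (hm : ∀ t, m t = if |t - c| ≤ h then (1 / μ₂ - 1 / μ₁) * (h - |t - c|) else 0)
    (hs2 : ∀ t, s2 t =
      if t ≤ c - h then 2 * h * v₁ / μ₁ ^ 3
      else if c + h ≤ t then 2 * h * v₂ / μ₂ ^ 3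
      else (t + h - c) * v₂ / μ₂ ^ 3 + (c - (t - h)) * v₁ / μ₁ ^ 3)
    (hΛ : ∀ t, Λ t = m t / Real.sqrt (s2 t)) :
    StrictMonoOn Λ (Set.Icc (c - h) c) ∧ ConcaveOn ℝ (Set.Icc (c - h) c) Λ ∧
      StrictAntiOn Λ (Set.Icc c (c + h)) ∧ ConvexOn ℝ (Set.Icc c (c + h)) Λ :=
  sharkFin_west_general T c h μ₁ μ₂ v₁ v₂ hh hμ₁ hv₁ hrate hvar m s2 Λ hm hs2 hΛ
end

section
/- With m, s, Λ as above, if 1/μ₂ > 1/μ₁ and σ₂²/μ₂³ < σ₁²/μ₁³ (so s² is decreasing on [c-h, c+h]), then Λ is strictly increasing and convex on [c - h, c], and strictly decreasing and concave on [c, c + h]. -/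
open Set Real

private lemma aux_s_pos {u v α β : ℝ} (hu : 0 < u) (hv : 0 < v) (hα : 0 ≤ α)
    (hβ : 0 ≤ β) (hαβ : α + β = 1) : 0 < α * u + β * v := by
  rcases le_total u v with h | h
  · nlinarith [mul_nonneg hβ (sub_nonneg.2 h)]
  · nlinarith [mul_nonneg hα (sub_nonneg.2 h)]

private lemma aux_one_div_le {u v α β : ℝ} (hu : 0 < u) (hv : 0 < v) (hα : 0 ≤ α)
    (hβ : 0 ≤ β) (hαβ : α + β = 1) : 1 / (α * u + β * v) ≤ α / u + β / v := by
  have hs := aux_s_pos hu hv hα hβ hαβ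
  rw [div_add_div _ _ (ne_of_gt hu) (ne_of_gt hv), div_le_div_iff₀ hs (by positivity)]
  have h2 : (α + β) ^ 2 = 1 := by rw [hαβ]; norm_num
  nlinarith [mul_nonneg (mul_nonneg hα hβ) (sq_nonneg (u - v)), h2, mul_pos hu hv]

private lemma key_convexOn (Dk B : ℝ) (hDk : 0 ≤ Dk) (hB : 0 ≤ B) {S : Set ℝ}
    (hS : Convex ℝ S) (g : ℝ → ℝ)
    (haff : ∀ x y α β : ℝ, α + β = 1 → g (α * x + β * y) = α * g x + β * g y)
    (hpos : ∀ t ∈ S, 0 < g t) :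
    ConvexOn ℝ S (fun t => Dk * (B - g t) / Real.sqrt (g t)) := by
  refine ⟨hS, fun x hx y hy α β hα hβ hαβ => ?_⟩
  simp only [smul_eq_mul]
  have hgx := hpos x hx
  have hgy := hpos y hy
  have hu : 0 < Real.sqrt (g x) := Real.sqrt_pos.2 hgx
  have hv : 0 < Real.sqrt (g y) := Real.sqrt_pos.2 hgy
  set u := Real.sqrt (g x) with hu_def
  set v := Real.sqrt (g y) with hv_def
  have hz : g (α * x + β * y) = α * g x + β * g y := haff x y α β hαβ
  have hw : Real.sqrt (g (α * x + β * y)) = Real.sqrt (α * g x + β * g y) := by rw [hz]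
  set w := Real.sqrt (g (α * x + β * y)) with hw_def
  have hwpos : 0 < w := Real.sqrt_pos.2 (by rw [hz]; nlinarith [mul_nonneg hα hgx.le, mul_nonneg hβ hgy.le, aux_s_pos hgx hgy hα hβ hαβ])
  have hu2 : u ^ 2 = g x := Real.sq_sqrt hgx.le
  have hv2 : v ^ 2 = g y := Real.sq_sqrt hgy.le
  have hw2 : w ^ 2 = α * g x + β * g y := by rw [hw_def, hz]; exact Real.sq_sqrt (by nlinarith [mul_nonneg hα hgx.le, mul_nonneg hβ hgy.le, aux_s_pos hgx hgy hα hβ hαβ])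
  have hconc := (Real.strictConcaveOn_sqrt.concaveOn).2 (mem_Ici.2 hgx.le) (mem_Ici.2 hgy.le) hα hβ hαβ
  simp only [smul_eq_mul] at hconc
  have hw_ge : α * u + β * v ≤ w := by rw [hw_def, hz]; exact hconc
  have hspos : 0 < α * u + β * v := aux_s_pos hu hv hα hβ hαβ
  have h1 : 1 / (α * u + β * v) ≤ α / u + β / v := aux_one_div_le hu hv hα hβ hαβ
  have e0 : Dk * (B - g (α * x + β * y)) / w = Dk * B / w - Dk * w := by
    rw [hz, ← hw2]; field_simp
  have ex : Dk * (B - g x) / u = Dk * B / u - Dk * u := by rw [← hu2]; field_simp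
  have ey : Dk * (B - g y) / v = Dk * B / v - Dk * v := by rw [← hv2]; field_simp
  rw [e0]
  calc Dk * B / w - Dk * w ≤ Dk * B / (α * u + β * v) - Dk * (α * u + β * v) := by
        gcongr
      _ = Dk * B * (1 / (α * u + β * v)) - Dk * (α * u + β * v) := by ring
      _ ≤ Dk * B * (α / u + β / v) - Dk * (α * u + β * v) := by
        have := mul_le_mul_of_nonneg_left h1 (by positivity : (0:ℝ) ≤ Dk * B)
        linarith
      _ = α * (Dk * B / u - Dk * u) + β * (Dk * B / v - Dk * v) := by field_simp; ring
      _ = α * (Dk * (B - g x) / u) + β * (Dk * (B - g y) / v) := by rw [ex, ey]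

private lemma convexOn_congr_aux {s : Set ℝ} {f₁ f₂ : ℝ → ℝ}
    (h : ∀ x ∈ s, f₁ x = f₂ x) (hf : ConvexOn ℝ s f₂) : ConvexOn ℝ s f₁ :=
  ⟨hf.1, fun x hx y hy α β hα hβ hαβ => by
    rw [h _ (hf.1 hx hy hα hβ hαβ), h _ hx, h _ hy]; exact hf.2 hx hy hα hβ hαβ⟩

private lemma concaveOn_congr_aux {s : Set ℝ} {f₁ f₂ : ℝ → ℝ}
    (h : ∀ x ∈ s, f₁ x = f₂ x) (hf : ConcaveOn ℝ s f₂) : ConcaveOn ℝ s f₁ :=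
  ⟨hf.1, fun x hx y hy α β hα hβ hαβ => by
    rw [h _ (hf.1 hx hy hα hβ hαβ), h _ hx, h _ hy]; exact hf.2 hx hy hα hβ hαβ⟩

/-- Shark heading west: for m ≥ 0 and s² increasing, Λ is strictly increasing and concave
on [c-h, c], and strictly decreasing and convex on [c, c+h]. -/
theorem sharkFin_east
    (T c h μ₁ μ₂ v₁ v₂ : ℝ)
    (hT : 0 < T) (hc : c ∈ Set.Ioo 0 T) (hh : h ∈ Set.Ioc 0 (T / 2))
    (hμ₁ : 0 < μ₁) (hμ₂ : 0 < μ₂) (hv₁ : 0 < v₁) (hv₂ : 0 < v₂)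
    (hμne : μ₁ ≠ μ₂)
    (hrate : 1 / μ₂ > 1 / μ₁)
    (hvar : v₂ / μ₂ ^ 3 < v₁ / μ₁ ^ 3)
    (m s2 Λ : ℝ → ℝ)
    (hm : ∀ t, m t = if |t - c| ≤ h then (1 / μ₂ - 1 / μ₁) * (h - |t - c|) else 0)
    (hs2 : ∀ t, s2 t =
      if t ≤ c - h then 2 * h * v₁ / μ₁ ^ 3
      else if c + h ≤ t then 2 * h * v₂ / μ₂ ^ 3
      else (t + h - c) * v₂ / μ₂ ^ 3 + (c - (t - h)) * v₁ / μ₁ ^ 3)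
    (hΛ : ∀ t, Λ t = m t / Real.sqrt (s2 t)) :
    StrictMonoOn Λ (Set.Icc (c - h) c) ∧ ConvexOn ℝ (Set.Icc (c - h) c) Λ ∧
      StrictAntiOn Λ (Set.Icc c (c + h)) ∧ ConcaveOn ℝ (Set.Icc c (c + h)) Λ := by
  have h0 : 0 < h := hh.1
  set a : ℝ := v₂ / μ₂ ^ 3 with ha_def
  set b : ℝ := v₁ / μ₁ ^ 3 with hb_def
  set k : ℝ := 1 / μ₂ - 1 / μ₁ with hk_def
  have ha : 0 < a := by positivity
  have hb : 0 < b := by positivity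
  have hk : 0 < k := by simp only [hk_def]; linarith
  have hab : a < b := hvar
  have hD : 0 < b - a := by linarith
  set g : ℝ → ℝ := fun t => (t + h - c) * a + (c - (t - h)) * b with hg_def
  have haff : ∀ x y α β : ℝ, α + β = 1 → g (α * x + β * y) = α * g x + β * g y := by
    intro x y α β h1
    simp only [hg_def]
    linear_combination (-((h - c) * a + (c + h) * b)) * h1
  have hgpos : ∀ t ∈ Icc (c - h) (c + h), 0 < g t := by
    intro t ht
    simp only [hg_def]
    nlinarith [mul_nonneg (show (0:ℝ) ≤ c + h - t by linarith [ht.2]) hD.le,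
      mul_pos h0 ha, ht.1, ht.2]
  have hs2g : ∀ t ∈ Icc (c - h) (c + h), s2 t = g t := by
    intro t ht
    rw [hs2]
    split_ifs with h1 h2
    · have : t = c - h := le_antisymm h1 ht.1
      subst this; simp only [hg_def]; ring
    · have : t = c + h := le_antisymm ht.2 h2
      subst this; simp only [hg_def]; ring
    · simp only [hg_def]; ring
  -- simple forms of Λ on each half-interval
  have hΛL : ∀ t ∈ Icc (c - h) c, Λ t = k * (t - c + h) / Real.sqrt (g t) := by
    intro t ht
    have habs : |t - c| = -(t - c) := abs_of_nonpos (by linarith [ht.2])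
    rw [hΛ, hs2g t ⟨ht.1, by linarith [ht.2]⟩, hm, habs, if_pos (by linarith [ht.1])]
    ring_nf
  have hΛR : ∀ t ∈ Icc c (c + h), Λ t = k * (c + h - t) / Real.sqrt (g t) := by
    intro t ht
    have habs : |t - c| = t - c := abs_of_nonneg (by linarith [ht.1])
    rw [hΛ, hs2g t ⟨by linarith [ht.1], ht.2⟩, hm, habs, if_pos (by linarith [ht.2])]
    ring_nf
  have hgposL : ∀ t ∈ Icc (c - h) c, 0 < g t :=
    fun t ht => hgpos t ⟨ht.1, by linarith [ht.2]⟩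
  have hgposR : ∀ t ∈ Icc c (c + h), 0 < g t :=
    fun t ht => hgpos t ⟨by linarith [ht.1], ht.2⟩
  refine ⟨?_, ?_, ?_, ?_⟩
  · -- StrictMonoOn on [c-h, c]
    intro x hx y hy hxy
    rw [hΛL x hx, hΛL y hy]
    have hgx := hgposL x hx
    have hgy := hgposL y hy
    have hmono : g y ≤ g x := by simp only [hg_def]; nlinarith [hD, hxy]
    have hsy : 0 < Real.sqrt (g y) := Real.sqrt_pos.2 hgy
    calc k * (x - c + h) / Real.sqrt (g x)
        ≤ k * (x - c + h) / Real.sqrt (g y) := by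
          apply div_le_div_of_nonneg_left _ hsy (Real.sqrt_le_sqrt hmono)
          have : 0 ≤ x - c + h := by linarith [hx.1]
          positivity
      _ < k * (y - c + h) / Real.sqrt (g y) :=
          div_lt_div_of_pos_right (by nlinarith [hk]) hsy
  · -- ConvexOn on [c-h, c]
    refine convexOn_congr_aux ?_ (key_convexOn (k / (b - a)) (2 * h * b) (by positivity)
      (by positivity) (convex_Icc _ _) g haff hgposL)
    intro t ht
    rw [hΛL t ht]
    congr 1
    have hnum : 2 * h * b - g t = (b - a) * (t - c + h) := by simp only [hg_def]; ring
    rw [hnum]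
    field_simp
  · -- StrictAntiOn on [c, c+h]
    intro x hx y hy hxy
    rw [hΛR x hx, hΛR y hy]
    have hgx := hgposR x hx
    have hgy := hgposR y hy
    have hsx : 0 < Real.sqrt (g x) := Real.sqrt_pos.2 hgx
    have hsy : 0 < Real.sqrt (g y) := Real.sqrt_pos.2 hgy
    have hwy : 0 ≤ c + h - y := by linarith [hy.2]
    have hwx : 0 < c + h - x := by linarith [hy.2]
    apply lt_of_pow_lt_pow_left₀ 2
      (div_nonneg (mul_nonneg hk.le hwx.le) (Real.sqrt_nonneg _))
    rw [div_pow, div_pow, mul_pow, mul_pow, Real.sq_sqrt hgx.le, Real.sq_sqrt hgy.le,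
      div_lt_div_iff₀ hgy hgx]
    have t1 : 0 < 2 * h * a * ((c + h - x) + (c + h - y)) := by
      apply mul_pos (by positivity); linarith
    have t2 : 0 ≤ (b - a) * ((c + h - x) * (c + h - y)) :=
      mul_nonneg hD.le (mul_nonneg (by linarith) hwy)
    have key : 0 < (y - x) * (2 * h * a * ((c + h - x) + (c + h - y))
        + (b - a) * ((c + h - x) * (c + h - y))) :=
      mul_pos (by linarith) (by linarith)
    have core : (c + h - y) ^ 2 * g x < (c + h - x) ^ 2 * g y := by
      simp only [hg_def]; nlinarith [key]
    have hfin := mul_lt_mul_of_pos_left core (show (0:ℝ) < k ^ 2 by positivity)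
    linarith [hfin]
  · -- ConcaveOn on [c, c+h]
    have base := key_convexOn (k / (b - a)) (2 * h * a) (by positivity) (by positivity)
      (convex_Icc c (c + h)) g haff hgposR
    have base' : ConcaveOn ℝ (Icc c (c + h))
        (fun t => -(k / (b - a) * (2 * h * a - g t) / Real.sqrt (g t))) := by
      exact neg_concaveOn_iff.2 base
    refine concaveOn_congr_aux ?_ base'
    intro t ht
    rw [hΛR t ht]
    have hnum : g t - 2 * h * a = (b - a) * (c + h - t) := by simp only [hg_def]; ring
    have : -(k / (b - a) * (2 * h * a - g t) / Real.sqrt (g t))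
        = k / (b - a) * (g t - 2 * h * a) / Real.sqrt (g t) := by ring
    rw [this, hnum]
    congr 1
    field_simp
end

section
/- With m, s, Λ as above and μ₁ ≠ μ₂, if c ∈ [h, T - h] then the unique maximizer of |Λ(t)| over t ∈ [h, T - h] is t = c, i.e. |Λ(t)| < |Λ(c)| for all t ∈ [h, T - h] with t ≠ c. -/
open Set Real

set_option maxHeartbeats 1000000 in
/-- The unique maximizer of |Λ| over [h, T-h] is the change point c. -/
theorem sharkFin_argmax
    (T c h μ₁ μ₂ v₁ v₂ : ℝ)
    (hT : 0 < T) (hc : c ∈ Set.Ioo 0 T) (hh : h ∈ Set.Ioc 0 (T / 2))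
    (hμ₁ : 0 < μ₁) (hμ₂ : 0 < μ₂) (hv₁ : 0 < v₁) (hv₂ : 0 < v₂)
    (hμne : μ₁ ≠ μ₂)
    (hcin : c ∈ Set.Icc h (T - h))
    (m s2 Λ : ℝ → ℝ)
    (hm : ∀ t, m t = if |t - c| ≤ h then (1 / μ₂ - 1 / μ₁) * (h - |t - c|) else 0)
    (hs2 : ∀ t, s2 t =
      if t ≤ c - h then 2 * h * v₁ / μ₁ ^ 3
      else if c + h ≤ t then 2 * h * v₂ / μ₂ ^ 3
      else (t + h - c) * v₂ / μ₂ ^ 3 + (c - (t - h)) * v₁ / μ₁ ^ 3)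
    (hΛ : ∀ t, Λ t = m t / Real.sqrt (s2 t)) :
    ∀ t ∈ Set.Icc h (T - h), t ≠ c → |Λ t| < |Λ c| := by
  intro t ht htc
  obtain ⟨hh0, hh2⟩ := hh
  set K : ℝ := 1 / μ₂ - 1 / μ₁ with hKdef
  have hKne : K ≠ 0 := by
    rw [hKdef, sub_ne_zero]
    intro he
    apply hμne
    field_simp at he
    linarith
  have hK2 : 0 < K ^ 2 := by positivity
  set a : ℝ := v₂ / μ₂ ^ 3 with hadef
  set b : ℝ := v₁ / μ₁ ^ 3 with hbdef
  have ha : 0 < a := by rw [hadef]; positivity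
  have hb : 0 < b := by rw [hbdef]; positivity
  -- values at c
  have hs2c : s2 c = h * a + h * b := by
    rw [hs2, if_neg (by linarith), if_neg (by linarith), hadef, hbdef]
    ring
  have hmc : m c = K * h := by
    rw [hm, sub_self, abs_zero, if_pos hh0.le, sub_zero]
  have hSc : 0 < h * a + h * b := by positivity
  have hΛc : |Λ c| = |K| * h / Real.sqrt (h * a + h * b) := by
    rw [hΛ, hmc, hs2c, abs_div, abs_mul, abs_of_nonneg (Real.sqrt_nonneg _),
      abs_of_pos hh0]
  have hΛcpos : 0 < |Λ c| := by
    rw [hΛc]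
    positivity
  by_cases hd : |t - c| ≤ h
  · -- shark fin region
    have hst : s2 t = (t - c + h) * a + (c - t + h) * b := by
      rw [hs2]
      rcases abs_le.mp hd with ⟨h1, h2⟩
      split_ifs with h3 h4
      · have : t = c - h := le_antisymm h3 (by linarith)
        subst this; rw [hadef, hbdef]; ring
      · have : t = c + h := le_antisymm (by linarith) h4
        subst this; rw [hadef, hbdef]; ring
      · rw [hadef, hbdef]; ring
    have hSt : 0 < (t - c + h) * a + (c - t + h) * b := by
      rcases abs_le.mp hd with ⟨h1, h2⟩
      rcases le_or_gt t c with hle | hlt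
      · nlinarith [mul_pos (show (0:ℝ) < c - t + h by linarith) hb,
          mul_nonneg (show (0:ℝ) ≤ t - c + h by linarith) ha.le]
      · nlinarith [mul_pos (show (0:ℝ) < t - c + h by linarith) ha,
          mul_nonneg (show (0:ℝ) ≤ c - t + h by linarith) hb.le]
    have hmt : |m t| = |K| * (h - |t - c|) := by
      rw [hm, if_pos hd, abs_mul, abs_of_nonneg (by linarith [abs_le.mp hd] : (0:ℝ) ≤ h - |t - c|)]
    have hdpos : 0 < |t - c| := abs_pos.mpr (sub_ne_zero.mpr htc)
    rw [hΛ, hΛc, hst, abs_div, abs_of_nonneg (Real.sqrt_nonneg _), hmt,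
      div_lt_div_iff₀ (Real.sqrt_pos.mpr hSt) (Real.sqrt_pos.mpr hSc)]
    have hL : 0 ≤ |K| * (h - |t - c|) * Real.sqrt (h * a + h * b) := by
      have : (0:ℝ) ≤ h - |t - c| := by linarith [abs_le.mp hd]
      positivity
    refine lt_of_pow_lt_pow_left₀ 2 (by positivity) ?_
    have e1 : (|K| * (h - |t - c|) * Real.sqrt (h * a + h * b)) ^ 2
        = K ^ 2 * (h - |t - c|) ^ 2 * (h * a + h * b) := by
      rw [mul_pow, mul_pow, sq_abs, Real.sq_sqrt hSc.le]
    have e2 : (|K| * h * Real.sqrt ((t - c + h) * a + (c - t + h) * b)) ^ 2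
        = K ^ 2 * h ^ 2 * ((t - c + h) * a + (c - t + h) * b) := by
      rw [mul_pow, mul_pow, sq_abs, Real.sq_sqrt hSt.le]
    rw [e1, e2]
    have key : (h - |t - c|) ^ 2 * (h * a + h * b) < h ^ 2 * ((t - c + h) * a + (c - t + h) * b) := by
      rcases abs_le.mp hd with ⟨h1, h2⟩
      rcases lt_or_gt_of_ne htc with hlt | hgt
      · have he : |t - c| = c - t := by rw [abs_of_nonpos (by linarith : t - c ≤ 0)]; ring
        rw [he]
        have he1 : 0 < c - t := by linarith
        have he2 : 0 ≤ h - (c - t) := by linarith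
        have H1 : 0 < h * (b * ((c - t) * (3 * h - (c - t)))) :=
          mul_pos hh0 (mul_pos hb (mul_pos he1 (by linarith)))
        have H2 : 0 ≤ h * (a * ((c - t) * (h - (c - t)))) :=
          mul_nonneg hh0.le (mul_nonneg ha.le (mul_nonneg he1.le he2))
        nlinarith [H1, H2]
      · have he : |t - c| = t - c := abs_of_pos (by linarith)
        rw [he]
        have he1 : 0 < t - c := by linarith
        have he2 : 0 ≤ h - (t - c) := by linarith
        have H1 : 0 < h * (a * ((t - c) * (3 * h - (t - c)))) :=
          mul_pos hh0 (mul_pos ha (mul_pos he1 (by linarith)))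
        have H2 : 0 ≤ h * (b * ((t - c) * (h - (t - c)))) :=
          mul_nonneg hh0.le (mul_nonneg hb.le (mul_nonneg he1.le he2))
        nlinarith [H1, H2]
    calc K ^ 2 * (h - |t - c|) ^ 2 * (h * a + h * b)
        = K ^ 2 * ((h - |t - c|) ^ 2 * (h * a + h * b)) := by ring
      _ < K ^ 2 * (h ^ 2 * ((t - c + h) * a + (c - t + h) * b)) :=
          (mul_lt_mul_iff_right₀ hK2).mpr key
      _ = K ^ 2 * h ^ 2 * ((t - c + h) * a + (c - t + h) * b) := by ring
  · -- outside: Λ t = 0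
    have : Λ t = 0 := by rw [hΛ, hm, if_neg hd, zero_div]
    rw [this, abs_zero]
    exact hΛcpos
end

section
/- Let Φ⁽ⁿ⁾ be the compound point process equal to an i.i.d. renewal process with mean life time μ₁ on (0, nc] and an independent renewal process with mean life time μ₂ on (nc, nT], with counting process N⁽ⁿ⁾. Then for every t ∈ (c - h, c] and h > 0, almost surely (N⁽ⁿ⁾_{n(t+h)} − N⁽ⁿ⁾_{nt})/(nh) → ((t+h-c)/h)·(1/μ₂) + ((c-t)/h)·(1/μ₁) = 1/μ_ri(h,t) as n → ∞. -/
/-!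
By the strong law of large numbers, almost surely S_j / j → μ for each renewal process, and
since S_{N u} ≤ u < S_{N u + 1} this gives N u / u → 1 / μ. For t ≤ c < t + h the increment
of the compound process splits as (N₁(nc) - N₁(nt)) + (N₂(n(t+h)) - N₂(nc)), and each of the
four counts, divided by n, converges to its time argument over the corresponding mean.
-/

open MeasureTheory ProbabilityTheory Filter Set Real Topology

theorem monotone_of_le_iff_le_count {s : ℕ → ℝ} {N : ℝ → ℕ}
    (hN : ∀ u j, 1 ≤ j → (s j ≤ u ↔ j ≤ N u)) : Monotone N := by
  intro u v huv
  rcases Nat.eq_zero_or_pos (N u) with hzero | hpos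
  · exact hzero ▸ Nat.zero_le _
  · exact (hN v _ hpos).1 (((hN u _ hpos).2 le_rfl).trans huv)

theorem tendsto_succ_div_of_tendsto_div {s : ℕ → ℝ} {μ : ℝ}
    (hs : Tendsto (fun j : ℕ => s j / j) atTop (𝓝 μ)) :
    Tendsto (fun j : ℕ => s (j + 1) / j) atTop (𝓝 μ) := by
  have hratio : Tendsto (fun j : ℕ => ((j : ℝ) + 1) / j) atTop (𝓝 1) := by
    simpa only [inv_div, inv_one] using (tendsto_natCast_div_add_atTop (1 : ℝ)).inv₀ one_ne_zero
  have hshift : Tendsto (fun j : ℕ => s (j + 1) / ((j : ℝ) + 1)) atTop (𝓝 μ) := by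
    simpa only [Function.comp_def, Nat.cast_succ] using hs.comp (tendsto_add_atTop_nat 1)
  refine (mul_one μ ▸ hshift.mul hratio).congr' ?_
  filter_upwards [eventually_gt_atTop 0] with j hj
  field_simp

theorem tendsto_count_div_of_tendsto_sum_div {s : ℕ → ℝ} {μ : ℝ} (hμ : 0 < μ)
    (hs : Tendsto (fun j : ℕ => s j / j) atTop (𝓝 μ)) {N : ℝ → ℕ}
    (hN : ∀ u j, 1 ≤ j → (s j ≤ u ↔ j ≤ N u)) :
    Tendsto (fun u => (N u : ℝ) / u) atTop (𝓝 μ⁻¹) := by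
  have hNtop : Tendsto N atTop atTop := tendsto_atTop_atTop.2 fun j =>
    ⟨s (j + 1), fun u hu => (Nat.le_succ j).trans ((hN u _ j.succ_pos).1 hu)⟩
  have hpos : ∀ᶠ u in atTop, 1 ≤ N u := hNtop.eventually_ge_atTop 1
  have hlower : ∀ᶠ u in atTop, s (N u) / N u ≤ u / N u := by
    filter_upwards [hpos] with u hu
    gcongr
    exact (hN u _ hu).2 le_rfl
  have hupper : ∀ᶠ u in atTop, u / N u ≤ s (N u + 1) / N u := by
    filter_upwards with u
    gcongr
    by_contra! hlt
    exact (N u).not_succ_le_self ((hN u _ (N u).succ_pos).1 hlt.le)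
  have hinv : Tendsto (fun u => u / N u) atTop (𝓝 μ) :=
    tendsto_of_tendsto_of_tendsto_of_le_of_le' (hs.comp hNtop)
      ((tendsto_succ_div_of_tendsto_div hs).comp hNtop) hlower hupper
  simpa only [inv_div] using hinv.inv₀ hμ.ne'

theorem ae_tendsto_count_div {Ω : Type*} [MeasurableSpace Ω] {P : Measure Ω}
    {ξ : ℕ → Ω → ℝ} (hmeas : ∀ i, Measurable (ξ i))
    (hindep : Pairwise fun i j => IndepFun (ξ i) (ξ j) P)
    (hident : ∀ i, P.map (ξ i) = P.map (ξ 1)) (hint : Integrable (ξ 1) P)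
    {μ : ℝ} (hμ : 0 < μ) (hmean : ∫ ω, ξ 1 ω ∂P = μ)
    {S : ℕ → Ω → ℝ} (hS : ∀ j ω, S j ω = ∑ i ∈ Finset.Icc 1 j, ξ i ω)
    {N : ℝ → Ω → ℕ} (hN : ∀ u ω j, 1 ≤ j → (S j ω ≤ u ↔ j ≤ N u ω)) :
    ∀ᵐ ω ∂P, Tendsto (fun u => (N u ω : ℝ) / u) atTop (𝓝 μ⁻¹) := by
  have hslln := strong_law_ae_real (fun i => ξ (i + 1)) hint
    (fun i j hij => hindep (by simpa using hij))
    (fun i => ⟨(hmeas _).aemeasurable, (hmeas 1).aemeasurable, hident _⟩)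
  filter_upwards [hslln] with ω hω
  refine tendsto_count_div_of_tendsto_sum_div hμ ?_ (hN · ω)
  convert hω using 3 with j
  · rw [hS, Finset.range_eq_Ico, Finset.sum_Ico_add' (fun i => ξ i ω),
      ← Finset.Ico_add_one_right_eq_Icc]
  · exact hmean.symm

theorem tendsto_comp_natCast_mul_div {f : ℝ → ℝ} {a r : ℝ}
    (hf : Tendsto (fun u => f u / u) atTop (𝓝 a)) (hr : 0 < r) :
    Tendsto (fun n : ℕ => f (n * r) / n) atTop (𝓝 (a * r)) := by
  refine ((hf.comp (tendsto_natCast_atTop_atTop.atTop_mul_const hr)).mul_const r).congr' ?_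
  filter_upwards [eventually_gt_atTop 0] with n hn
  simp only [Function.comp_apply]
  field_simp

theorem compound_counting_slln_general
    {Ω : Type*} [MeasurableSpace Ω] (P : Measure Ω) [IsProbabilityMeasure P]
    (ξ₁ ξ₂ : ℕ → Ω → ℝ)
    (hmeas₁ : ∀ i, Measurable (ξ₁ i)) (hmeas₂ : ∀ i, Measurable (ξ₂ i))
    (hindep : iIndepFun (m := fun _ => Real.measurableSpace) (Sum.elim ξ₁ ξ₂) P)
    (hident₁ : ∀ i, Measure.map (ξ₁ i) P = Measure.map (ξ₁ 1) P)
    (hident₂ : ∀ i, Measure.map (ξ₂ i) P = Measure.map (ξ₂ 1) P)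
    (μ₁ μ₂ : ℝ) (hμ₁ : 0 < μ₁) (hμ₂ : 0 < μ₂)
    (hmean₁ : ∫ ω, ξ₁ 1 ω ∂P = μ₁) (hmean₂ : ∫ ω, ξ₂ 1 ω ∂P = μ₂)
    (hL2₁ : MemLp (ξ₁ 1) 2 P) (hL2₂ : MemLp (ξ₂ 1) 2 P)
    (S₁ S₂ : ℕ → Ω → ℝ)
    (hS₁ : ∀ j ω, S₁ j ω = ∑ i ∈ Finset.Icc 1 j, ξ₁ i ω)
    (hS₂ : ∀ j ω, S₂ j ω = ∑ i ∈ Finset.Icc 1 j, ξ₂ i ω)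
    (N₁ N₂ : ℝ → Ω → ℕ)
    (hN₁ : ∀ u : ℝ, ∀ ω, ∀ j : ℕ, 1 ≤ j → (S₁ j ω ≤ u ↔ j ≤ N₁ u ω))
    (hN₂ : ∀ u : ℝ, ∀ ω, ∀ j : ℕ, 1 ≤ j → (S₂ j ω ≤ u ↔ j ≤ N₂ u ω))
    (T c h : ℝ) (hc : c ∈ Set.Ioo 0 T)
    (Nn : ℕ → ℝ → Ω → ℕ)
    (hNn : ∀ n : ℕ, ∀ u : ℝ, ∀ ω, Nn n u ω =
      if u ≤ (n : ℝ) * c then N₁ u ω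
      else N₁ ((n : ℝ) * c) ω + (N₂ u ω - N₂ ((n : ℝ) * c) ω))
    (t : ℝ) (ht : t ∈ Set.Ioc (c - h) c) (htpos : 0 < t) :
    ∀ᵐ ω ∂P, Tendsto
      (fun n : ℕ =>
        (((Nn n ((n : ℝ) * (t + h)) ω : ℝ) - (Nn n ((n : ℝ) * t) ω : ℝ)) / ((n : ℝ) * h)))
      atTop (nhds (((t + h - c) / h) * (1 / μ₂) + ((c - t) / h) * (1 / μ₁))) := by
  have hct : c < t + h := by linarith [ht.1]
  have renewal₁ := ae_tendsto_count_div hmeas₁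
    (fun i j hij => hindep.indepFun (Sum.inl_injective.ne hij)) hident₁
    (hL2₁.integrable one_le_two) hμ₁ hmean₁ hS₁ hN₁
  have renewal₂ := ae_tendsto_count_div hmeas₂
    (fun i j hij => hindep.indepFun (Sum.inr_injective.ne hij)) hident₂
    (hL2₂.integrable one_le_two) hμ₂ hmean₂ hS₂ hN₂
  filter_upwards [renewal₁, renewal₂] with ω h₁ h₂
  have hlim := ((((tendsto_comp_natCast_mul_div h₁ hc.1).sub
    (tendsto_comp_natCast_mul_div h₁ htpos)).add
    (tendsto_comp_natCast_mul_div h₂ (hc.1.trans hct))).sub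
    (tendsto_comp_natCast_mul_div h₂ hc.1)).div_const h
  rw [show ((t + h - c) / h) * (1 / μ₂) + ((c - t) / h) * (1 / μ₁) =
    (μ₁⁻¹ * c - μ₁⁻¹ * t + μ₂⁻¹ * (t + h) - μ₂⁻¹ * c) / h by ring]
  refine hlim.congr' ?_
  filter_upwards [eventually_gt_atTop 0] with n hn
  have hn' : (0 : ℝ) < n := Nat.cast_pos.2 hn
  have hnct : (n : ℝ) * c < n * (t + h) := mul_lt_mul_of_pos_left hct hn'
  rw [hNn, hNn, if_neg hnct.not_ge, if_pos (mul_le_mul_of_nonneg_left ht.2 hn'.le), Nat.cast_add,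
    Nat.cast_sub (monotone_of_le_iff_le_count (hN₂ · ω) hnct.le)]
  field_simp
  ring

/-- Strong law for counting increments of the compound process with one change point at nc:
for t ∈ (c-h, c], (N⁽ⁿ⁾_{n(t+h)} - N⁽ⁿ⁾_{nt})/(nh) → ((t+h-c)/h)(1/μ₂) + ((c-t)/h)(1/μ₁). -/
theorem compound_counting_slln
    {Ω : Type*} [MeasurableSpace Ω] (P : Measure Ω) [IsProbabilityMeasure P]
    (ξ₁ ξ₂ : ℕ → Ω → ℝ)
    (hmeas₁ : ∀ i, Measurable (ξ₁ i)) (hmeas₂ : ∀ i, Measurable (ξ₂ i))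
    (hindep : iIndepFun (m := fun _ => Real.measurableSpace) (Sum.elim ξ₁ ξ₂) P)
    (hident₁ : ∀ i, Measure.map (ξ₁ i) P = Measure.map (ξ₁ 1) P)
    (hident₂ : ∀ i, Measure.map (ξ₂ i) P = Measure.map (ξ₂ 1) P)
    (hpos₁ : ∀ i, ∀ᵐ ω ∂P, 0 < ξ₁ i ω) (hpos₂ : ∀ i, ∀ᵐ ω ∂P, 0 < ξ₂ i ω)
    (μ₁ μ₂ : ℝ) (hμ₁ : 0 < μ₁) (hμ₂ : 0 < μ₂)
    (hmean₁ : ∫ ω, ξ₁ 1 ω ∂P = μ₁) (hmean₂ : ∫ ω, ξ₂ 1 ω ∂P = μ₂)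
    (hL2₁ : MemLp (ξ₁ 1) 2 P) (hL2₂ : MemLp (ξ₂ 1) 2 P)
    (S₁ S₂ : ℕ → Ω → ℝ)
    (hS₁ : ∀ j ω, S₁ j ω = ∑ i ∈ Finset.Icc 1 j, ξ₁ i ω)
    (hS₂ : ∀ j ω, S₂ j ω = ∑ i ∈ Finset.Icc 1 j, ξ₂ i ω)
    (N₁ N₂ : ℝ → Ω → ℕ)
    (hN₁ : ∀ u : ℝ, ∀ ω, ∀ j : ℕ, 1 ≤ j → (S₁ j ω ≤ u ↔ j ≤ N₁ u ω))
    (hN₂ : ∀ u : ℝ, ∀ ω, ∀ j : ℕ, 1 ≤ j → (S₂ j ω ≤ u ↔ j ≤ N₂ u ω))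
    (T c h : ℝ) (hT : 0 < T) (hc : c ∈ Set.Ioo 0 T) (hh : h ∈ Set.Ioc 0 (T / 2))
    (Nn : ℕ → ℝ → Ω → ℕ)
    (hNn : ∀ n : ℕ, ∀ u : ℝ, ∀ ω, Nn n u ω =
      if u ≤ (n : ℝ) * c then N₁ u ω
      else N₁ ((n : ℝ) * c) ω + (N₂ u ω - N₂ ((n : ℝ) * c) ω))
    (t : ℝ) (ht : t ∈ Set.Ioc (c - h) c) (htpos : 0 < t) :
    ∀ᵐ ω ∂P, Tendsto
      (fun n : ℕ =>
        (((Nn n ((n : ℝ) * (t + h)) ω : ℝ) - (Nn n ((n : ℝ) * t) ω : ℝ)) / ((n : ℝ) * h)))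
      atTop (nhds (((t + h - c) / h) * (1 / μ₂) + ((c - t) / h) * (1 / μ₁))) :=
  compound_counting_slln_general P ξ₁ ξ₂ hmeas₁ hmeas₂ hindep hident₁ hident₂ μ₁ μ₂ hμ₁ hμ₂ hmean₁
    hmean₂ hL2₁ hL2₂ S₁ S₂ hS₁ hS₂ N₁ N₂ hN₁ hN₂ T c h hc Nn hNn t ht htpos
end

section
/- Let N⁽ⁿ⁾ be as in the change-point construction and assume the marginal almost-sure convergence (N⁽ⁿ⁾_{n(t+h)} − N⁽ⁿ⁾_{nt})/(nh) → 1/μ_ri(h,t) holds for each fixed t. Then the convergence is uniform over t ∈ [0, T - h]: almost surely, sup_{t∈[0,T-h]} |(N⁽ⁿ⁾_{n(t+h)} − N⁽ⁿ⁾_{nt})/(nh) − 1/μ_ri(h,t)| → 0 as n → ∞. -/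
/-!
By the strong law of large numbers `S_j / j → μᵢ` almost surely, and inverting the renewal
relation `S_{N(u)} ≤ u < S_{N(u)+1}` gives `Nᵢ(n a) / n → a / μᵢ` for every `a ≥ 0`. Hence the
rescaled compound process `N⁽ⁿ⁾(n u) / n` converges pointwise to the continuous piecewise linear
function `Λ(u) = min(u, c) / μ₁ + (u - c)⁺ / μ₂`. Since every `N⁽ⁿ⁾` is nondecreasing, this
convergence is uniform on compact intervals (Pólya's argument: squeeze between nearby points
where the convergence holds and use the continuity of `Λ`). The window increments then converge
uniformly as well, to `(Λ(t + h) - Λ(t)) / h = 1 / μ_ri(h, t)`.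
-/

open MeasureTheory ProbabilityTheory Filter Set Real Topology

theorem tendstoUniformlyOn_Icc_of_monotoneOn {ι : Type*} {l : Filter ι} {F : ι → ℝ → ℝ}
    {f : ℝ → ℝ} {a b : ℝ} (hF : ∀ i, MonotoneOn (F i) (Icc a b))
    (hf : ContinuousOn f (Icc a b)) (h : ∀ x ∈ Icc a b, Tendsto (F · x) l (𝓝 (f x))) :
    TendstoUniformlyOn F f l (Icc a b) := by
  rw [← tendstoLocallyUniformlyOn_iff_tendstoUniformlyOn_of_compact isCompact_Icc,
    Metric.tendstoLocallyUniformlyOn_iff]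
  intro ε hε x hx
  obtain ⟨η, hη, hfη⟩ := Metric.continuousWithinAt_iff.1 (hf x hx) (ε / 3) (by positivity)
  have hclose : ∀ y ∈ Icc a b, |y - x| ≤ η / 2 → |f y - f x| < ε / 3 := fun y hy hyx =>
    hfη hy (lt_of_le_of_lt hyx (half_lt_self hη))
  -- Squeeze `F i` between its values at the two points of `Icc a b` at distance `η / 2` from `x`.
  set p := max a (x - η / 2)
  set q := min b (x + η / 2)
  have hp : p ∈ Icc a b := ⟨le_max_left _ _, max_le (hx.1.trans hx.2) (by linarith [hx.2])⟩
  have hq : q ∈ Icc a b := ⟨le_min (hx.1.trans hx.2) (by linarith [hx.1]), min_le_left _ _⟩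
  have hfp := hclose p hp (by grind [abs_le])
  have hfq := hclose q hq (by grind [abs_le])
  refine ⟨Icc a b ∩ Icc (x - η / 2) (x + η / 2),
    inter_mem self_mem_nhdsWithin (mem_nhdsWithin_of_mem_nhds (Icc_mem_nhds (by linarith)
      (by linarith))), ?_⟩
  filter_upwards [Metric.tendsto_nhds.1 (h p hp) (ε / 3) (by positivity),
    Metric.tendsto_nhds.1 (h q hq) (ε / 3) (by positivity)] with i hip hiq y ⟨hy, hyx⟩
  have hfy := hclose y hy (abs_le.2 ⟨by linarith [hyx.1], by linarith [hyx.2]⟩)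
  have hpy : F i p ≤ F i y := hF i hp hy (max_le hy.1 hyx.1)
  have hyq : F i y ≤ F i q := hF i hy hq (le_min hy.2 hyx.2)
  rw [Real.dist_eq] at hip hiq ⊢
  rw [abs_lt] at *
  constructor <;> linarith

theorem TendstoUniformlyOn.sub_comp_add_const {ι β : Type*} [UniformSpace β] [AddGroup β]
    [IsUniformAddGroup β] {l : Filter ι} {F : ι → ℝ → β} {f : ℝ → β} {a b h : ℝ}
    (hF : TendstoUniformlyOn F f l (Icc a b)) (hh : 0 ≤ h) :
    TendstoUniformlyOn (fun i t => F i (t + h) - F i t) (fun t => f (t + h) - f t) l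
      (Icc a (b - h)) := by
  have hshift := (hF.comp (· + h)).mono fun t (ht : t ∈ Icc a (b - h)) =>
    (⟨by linarith [ht.1], by linarith [ht.2]⟩ : t + h ∈ Icc a b)
  exact hshift.sub (hF.mono (Icc_subset_Icc_right (by linarith)))

theorem ae_tendsto_sum_Icc_div {Ω : Type*} [MeasurableSpace Ω] {P : Measure Ω}
    {ξ : ℕ → Ω → ℝ} (hmeas : ∀ i, AEMeasurable (ξ i) P)
    (hindep : Pairwise fun i j => IndepFun (ξ i) (ξ j) P)
    (hident : ∀ i, P.map (ξ i) = P.map (ξ 1)) (hint : Integrable (ξ 1) P) :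
    ∀ᵐ ω ∂P, Tendsto (fun j : ℕ => (∑ i ∈ Finset.Icc 1 j, ξ i ω) / j) atTop
      (𝓝 (∫ ω, ξ 1 ω ∂P)) := by
  have hslln := strong_law_ae_real (fun i => ξ (i + 1)) hint
    (fun i j hij => hindep (by simpa using hij)) fun i => ⟨hmeas _, hmeas _, hident (i + 1)⟩
  filter_upwards [hslln] with ω hω
  refine hω.congr fun j => ?_
  rw [← Finset.Ico_add_one_right_eq_Icc, Finset.sum_Ico_eq_sum_range, add_tsub_cancel_right]
  simp only [add_comm]

def IsRenewalCount (s : ℕ → ℝ) (ν : ℝ → ℕ) : Prop :=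
  ∀ u j, 1 ≤ j → (s j ≤ u ↔ j ≤ ν u)

namespace IsRenewalCount

variable {s : ℕ → ℝ} {ν : ℝ → ℕ}

theorem monotone (hν : IsRenewalCount s ν) : Monotone ν := by
  intro u v huv
  rcases Nat.eq_zero_or_pos (ν u) with h0 | hpos
  · exact h0 ▸ Nat.zero_le _
  · exact (hν v _ hpos).1 (((hν u _ hpos).2 le_rfl).trans huv)

theorem le_of_one_le (hν : IsRenewalCount s ν) {u : ℝ} (hu : 1 ≤ ν u) : s (ν u) ≤ u :=
  (hν u _ hu).2 le_rfl

theorem lt_succ (hν : IsRenewalCount s ν) (u : ℝ) : u < s (ν u + 1) := by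
  by_contra! hle
  have := (hν u _ (Nat.le_add_left 1 _)).1 hle
  omega

theorem tendsto_atTop (hν : IsRenewalCount s ν) : Tendsto ν atTop atTop := by
  refine Filter.tendsto_atTop.2 fun j => ?_
  filter_upwards [eventually_ge_atTop (s (max j 1))] with u hu
  exact (le_max_left j 1).trans ((hν u _ (le_max_right j 1)).1 hu)

theorem tendsto_div_atTop (hν : IsRenewalCount s ν) {m : ℝ} (hm : 0 < m)
    (hs : Tendsto (fun j : ℕ => s j / j) atTop (𝓝 m)) :
    Tendsto (fun u => (ν u : ℝ) / u) atTop (𝓝 m⁻¹) := by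
  have hsucc : Tendsto (fun j : ℕ => s (j + 1) / j) atTop (𝓝 m) := by
    have hshift : Tendsto (fun j : ℕ => s (j + 1) / (j + 1 : ℕ)) atTop (𝓝 m) :=
      hs.comp (tendsto_add_atTop_nat 1)
    have hratio := (tendsto_natCast_div_add_atTop (1 : ℝ)).inv₀ one_ne_zero
    rw [inv_one] at hratio
    refine (mul_one m ▸ hshift.mul hratio).congr fun j => ?_
    rw [inv_div, Nat.cast_add_one, div_mul_div_cancel₀ (Nat.cast_add_one_ne_zero j)]
  -- `s (ν u) ≤ u < s (ν u + 1)` squeezes `u / ν u`.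
  have hsq : Tendsto (fun u => u / ν u) atTop (𝓝 m) := by
    refine tendsto_of_tendsto_of_tendsto_of_le_of_le' (hs.comp hν.tendsto_atTop)
      (hsucc.comp hν.tendsto_atTop) ?_ ?_ <;>
    filter_upwards [hν.tendsto_atTop.eventually_ge_atTop 1] with u hu <;>
    refine div_le_div_of_nonneg_right ?_ (Nat.cast_nonneg _)
    exacts [hν.le_of_one_le hu, (hν.lt_succ u).le]
  simpa only [inv_div] using hsq.inv₀ hm.ne'

theorem tendsto_div_natCast_mul (hν : IsRenewalCount s ν) {m : ℝ} (hm : 0 < m)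
    (hs : Tendsto (fun j : ℕ => s j / j) atTop (𝓝 m)) {a : ℝ} (ha : 0 ≤ a) :
    Tendsto (fun n : ℕ => (ν (n * a) : ℝ) / n) atTop (𝓝 (a / m)) := by
  rcases ha.eq_or_lt with rfl | ha
  · simpa using tendsto_const_div_atTop_nhds_zero_nat (ν 0 : ℝ)
  have hlin : Tendsto (fun n : ℕ => (n : ℝ) * a) atTop atTop :=
    tendsto_natCast_atTop_atTop.atTop_mul_const ha
  refine (((hν.tendsto_div_atTop hm hs).comp hlin).const_mul a).congr' ?_
  filter_upwards [eventually_ne_atTop 0] with n hn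
  simp only [Function.comp_apply]
  field_simp

end IsRenewalCount

noncomputable def changePointCount (ν₁ ν₂ : ℝ → ℕ) (c : ℝ) (n : ℕ) (u : ℝ) : ℕ :=
  if u ≤ (n : ℝ) * c then ν₁ u else ν₁ ((n : ℝ) * c) + (ν₂ u - ν₂ ((n : ℝ) * c))

/-- The integral over `[0, u]` of the renewal rate, `1 / m₁` before the change point `c` and
`1 / m₂` after it. -/
noncomputable def cumulativeRate (m₁ m₂ c u : ℝ) : ℝ :=
  min u c / m₁ + max (u - c) 0 / m₂

theorem continuous_cumulativeRate (m₁ m₂ c : ℝ) : Continuous (cumulativeRate m₁ m₂ c) := by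
  unfold cumulativeRate
  fun_prop

section changePoint

variable {ν₁ ν₂ : ℝ → ℕ} {c : ℝ}

theorem monotone_changePointCount (h₁ : Monotone ν₁) (h₂ : Monotone ν₂) (n : ℕ) :
    Monotone (changePointCount ν₁ ν₂ c n) := by
  intro u v huv
  unfold changePointCount
  by_cases hv : v ≤ n * c
  · rw [if_pos (huv.trans hv), if_pos hv]
    exact h₁ huv
  by_cases hu : u ≤ n * c
  · rw [if_pos hu, if_neg hv]
    exact (h₁ hu).trans (Nat.le_add_right _ _)
  · rw [if_neg hu, if_neg hv]
    have := h₂ huv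
    omega

theorem tendsto_changePointCount_div {m₁ m₂ : ℝ} (h₂ : Monotone ν₂) (hc : 0 ≤ c)
    (hν₁ : ∀ a, 0 ≤ a → Tendsto (fun n : ℕ => (ν₁ (n * a) : ℝ) / n) atTop (𝓝 (a / m₁)))
    (hν₂ : ∀ a, 0 ≤ a → Tendsto (fun n : ℕ => (ν₂ (n * a) : ℝ) / n) atTop (𝓝 (a / m₂)))
    {u : ℝ} (hu : 0 ≤ u) :
    Tendsto (fun n : ℕ => (changePointCount ν₁ ν₂ c n (n * u) : ℝ) / n) atTop
      (𝓝 (cumulativeRate m₁ m₂ c u)) := by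
  unfold changePointCount cumulativeRate
  rcases le_or_gt u c with huc | huc
  · rw [min_eq_left huc, max_eq_right (by linarith), zero_div, add_zero]
    refine (hν₁ u hu).congr fun n => ?_
    rw [if_pos (mul_le_mul_of_nonneg_left huc n.cast_nonneg)]
  · rw [min_eq_right huc.le, max_eq_left (by linarith), sub_div]
    refine ((hν₁ c hc).add ((hν₂ u hu).sub (hν₂ c hc))).congr' ?_
    filter_upwards [eventually_gt_atTop 0] with n hn
    have hlt : (n : ℝ) * c < n * u := mul_lt_mul_of_pos_left huc (Nat.cast_pos.2 hn)
    rw [if_neg hlt.not_ge, Nat.cast_add, Nat.cast_sub (h₂ hlt.le)]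
    ring

theorem tendstoUniformlyOn_changePointCount_div {m₁ m₂ : ℝ} (h₁ : Monotone ν₁)
    (h₂ : Monotone ν₂) (hc : 0 ≤ c)
    (hν₁ : ∀ a, 0 ≤ a → Tendsto (fun n : ℕ => (ν₁ (n * a) : ℝ) / n) atTop (𝓝 (a / m₁)))
    (hν₂ : ∀ a, 0 ≤ a → Tendsto (fun n : ℕ => (ν₂ (n * a) : ℝ) / n) atTop (𝓝 (a / m₂)))
    (b : ℝ) :
    TendstoUniformlyOn (fun (n : ℕ) u => (changePointCount ν₁ ν₂ c n (n * u) : ℝ) / n)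
      (cumulativeRate m₁ m₂ c) atTop (Icc 0 b) := by
  refine tendstoUniformlyOn_Icc_of_monotoneOn (fun n => ?_)
    (continuous_cumulativeRate m₁ m₂ c).continuousOn
    (fun u hu => tendsto_changePointCount_div h₂ hc hν₁ hν₂ hu.1)
  refine (Monotone.div_const ?_ n.cast_nonneg).monotoneOn _
  exact Nat.mono_cast.comp ((monotone_changePointCount h₁ h₂ n).comp
    (monotone_mul_left_of_nonneg n.cast_nonneg))

end changePoint

/-- The paper's `μ_ri(h, t)`. -/
noncomputable def windowMean (μ₁ μ₂ c h t : ℝ) : ℝ :=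
  if t ≤ c - h then μ₁
  else if t ≤ c then h * μ₁ * μ₂ / ((c - t) * μ₂ + (t + h - c) * μ₁)
  else μ₂

theorem one_div_windowMean {μ₁ μ₂ h : ℝ} (hμ₁ : 0 < μ₁) (hμ₂ : 0 < μ₂) (hh : 0 < h) (c t : ℝ) :
    1 / windowMean μ₁ μ₂ c h t =
      (cumulativeRate μ₁ μ₂ c (t + h) - cumulativeRate μ₁ μ₂ c t) / h := by
  unfold windowMean cumulativeRate
  split_ifs with hleft hmid
  · rw [min_eq_left (by linarith), min_eq_left (by linarith), max_eq_right (by linarith),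
      max_eq_right (by linarith)]
    field_simp
    ring
  · have hden : 0 < (c - t) * μ₂ + (t + h - c) * μ₁ := by
      nlinarith [mul_nonneg (sub_nonneg.2 hmid) hμ₂.le]
    rw [min_eq_right (by linarith), min_eq_left hmid, max_eq_left (by linarith),
      max_eq_right (by linarith), one_div_div]
    field_simp
    ring
  · rw [min_eq_right (by linarith), min_eq_right (by linarith), max_eq_left (by linarith),
      max_eq_left (by linarith)]
    field_simp
    ring

theorem compound_counting_uniform_slln_general
    {Ω : Type*} [MeasurableSpace Ω] (P : Measure Ω) [IsProbabilityMeasure P]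
    (ξ₁ ξ₂ : ℕ → Ω → ℝ)
    (hmeas₁ : ∀ i, Measurable (ξ₁ i)) (hmeas₂ : ∀ i, Measurable (ξ₂ i))
    (hindep : iIndepFun (m := fun _ => Real.measurableSpace) (Sum.elim ξ₁ ξ₂) P)
    (hident₁ : ∀ i, Measure.map (ξ₁ i) P = Measure.map (ξ₁ 1) P)
    (hident₂ : ∀ i, Measure.map (ξ₂ i) P = Measure.map (ξ₂ 1) P)
    (μ₁ μ₂ : ℝ) (hμ₁ : 0 < μ₁) (hμ₂ : 0 < μ₂)
    (hmean₁ : ∫ ω, ξ₁ 1 ω ∂P = μ₁) (hmean₂ : ∫ ω, ξ₂ 1 ω ∂P = μ₂)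
    (hL2₁ : MemLp (ξ₁ 1) 2 P) (hL2₂ : MemLp (ξ₂ 1) 2 P)
    (S₁ S₂ : ℕ → Ω → ℝ)
    (hS₁ : ∀ j ω, S₁ j ω = ∑ i ∈ Finset.Icc 1 j, ξ₁ i ω)
    (hS₂ : ∀ j ω, S₂ j ω = ∑ i ∈ Finset.Icc 1 j, ξ₂ i ω)
    (N₁ N₂ : ℝ → Ω → ℕ)
    (hN₁ : ∀ u : ℝ, ∀ ω, ∀ j : ℕ, 1 ≤ j → (S₁ j ω ≤ u ↔ j ≤ N₁ u ω))
    (hN₂ : ∀ u : ℝ, ∀ ω, ∀ j : ℕ, 1 ≤ j → (S₂ j ω ≤ u ↔ j ≤ N₂ u ω))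
    (T c h : ℝ) (hc : c ∈ Set.Ioo 0 T) (hh : h ∈ Set.Ioc 0 (T / 2))
    (Nn : ℕ → ℝ → Ω → ℕ)
    (hNn : ∀ n : ℕ, ∀ u : ℝ, ∀ ω, Nn n u ω =
      if u ≤ (n : ℝ) * c then N₁ u ω
      else N₁ ((n : ℝ) * c) ω + (N₂ u ω - N₂ ((n : ℝ) * c) ω))
    (muri : ℝ → ℝ)
    (hmuri : ∀ t, muri t =
      if t ≤ c - h then μ₁
      else if t ≤ c then h * μ₁ * μ₂ / ((c - t) * μ₂ + (t + h - c) * μ₁)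
      else μ₂) :
    ∀ᵐ ω ∂P, TendstoUniformlyOn
      (fun (n : ℕ) (t : ℝ) =>
        (((Nn n ((n : ℝ) * (t + h)) ω : ℝ) - (Nn n ((n : ℝ) * t) ω : ℝ)) / ((n : ℝ) * h)))
      (fun t => 1 / muri t) atTop (Set.Icc 0 (T - h)) := by
  have slln₁ := ae_tendsto_sum_Icc_div (fun i => (hmeas₁ i).aemeasurable)
    (fun i j hij => hindep.indepFun (Sum.inl_injective.ne hij)) hident₁
    (hL2₁.integrable one_le_two)
  have slln₂ := ae_tendsto_sum_Icc_div (fun i => (hmeas₂ i).aemeasurable)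
    (fun i j hij => hindep.indepFun (Sum.inr_injective.ne hij)) hident₂
    (hL2₂.integrable one_le_two)
  filter_upwards [slln₁, slln₂] with ω hω₁ hω₂
  have hcount₁ : IsRenewalCount (S₁ · ω) (N₁ · ω) := fun u j => hN₁ u ω j
  have hcount₂ : IsRenewalCount (S₂ · ω) (N₂ · ω) := fun u j => hN₂ u ω j
  have hcumulative := tendstoUniformlyOn_changePointCount_div hcount₁.monotone hcount₂.monotone
    hc.1.le (fun a => hcount₁.tendsto_div_natCast_mul hμ₁ (by simpa [hS₁, hmean₁] using hω₁))
    (fun a => hcount₂.tendsto_div_natCast_mul hμ₂ (by simpa [hS₂, hmean₂] using hω₂)) T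
  refine (((uniformContinuous_div_const' h).comp_tendstoUniformlyOn
    (hcumulative.sub_comp_add_const hh.1.le)).congr (Eventually.of_forall fun n t _ => ?_))
    |>.congr_right fun t _ => ?_
  · simp only [Function.comp_apply, hNn, changePointCount]
    rw [← sub_div, div_div]
  · rw [Function.comp_apply, hmuri, ← one_div_windowMean hμ₁ hμ₂ hh.1]
    rfl

/-- Uniform strong law for counting increments of the compound process with one change
point: if the marginal a.s. convergence holds for each fixed t, the convergence is
uniform over t ∈ [0, T - h]. -/
theorem compound_counting_uniform_slln
    {Ω : Type*} [MeasurableSpace Ω] (P : Measure Ω) [IsProbabilityMeasure P]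
    (ξ₁ ξ₂ : ℕ → Ω → ℝ)
    (hmeas₁ : ∀ i, Measurable (ξ₁ i)) (hmeas₂ : ∀ i, Measurable (ξ₂ i))
    (hindep : iIndepFun (m := fun _ => Real.measurableSpace) (Sum.elim ξ₁ ξ₂) P)
    (hident₁ : ∀ i, Measure.map (ξ₁ i) P = Measure.map (ξ₁ 1) P)
    (hident₂ : ∀ i, Measure.map (ξ₂ i) P = Measure.map (ξ₂ 1) P)
    (hpos₁ : ∀ i, ∀ᵐ ω ∂P, 0 < ξ₁ i ω) (hpos₂ : ∀ i, ∀ᵐ ω ∂P, 0 < ξ₂ i ω)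
    (μ₁ μ₂ : ℝ) (hμ₁ : 0 < μ₁) (hμ₂ : 0 < μ₂)
    (hmean₁ : ∫ ω, ξ₁ 1 ω ∂P = μ₁) (hmean₂ : ∫ ω, ξ₂ 1 ω ∂P = μ₂)
    (hL2₁ : MemLp (ξ₁ 1) 2 P) (hL2₂ : MemLp (ξ₂ 1) 2 P)
    (S₁ S₂ : ℕ → Ω → ℝ)
    (hS₁ : ∀ j ω, S₁ j ω = ∑ i ∈ Finset.Icc 1 j, ξ₁ i ω)
    (hS₂ : ∀ j ω, S₂ j ω = ∑ i ∈ Finset.Icc 1 j, ξ₂ i ω)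
    (N₁ N₂ : ℝ → Ω → ℕ)
    (hN₁ : ∀ u : ℝ, ∀ ω, ∀ j : ℕ, 1 ≤ j → (S₁ j ω ≤ u ↔ j ≤ N₁ u ω))
    (hN₂ : ∀ u : ℝ, ∀ ω, ∀ j : ℕ, 1 ≤ j → (S₂ j ω ≤ u ↔ j ≤ N₂ u ω))
    (T c h : ℝ) (hT : 0 < T) (hc : c ∈ Set.Ioo 0 T) (hh : h ∈ Set.Ioc 0 (T / 2))
    (Nn : ℕ → ℝ → Ω → ℕ)
    (hNn : ∀ n : ℕ, ∀ u : ℝ, ∀ ω, Nn n u ω =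
      if u ≤ (n : ℝ) * c then N₁ u ω
      else N₁ ((n : ℝ) * c) ω + (N₂ u ω - N₂ ((n : ℝ) * c) ω))
    (muri : ℝ → ℝ)
    (hmuri : ∀ t, muri t =
      if t ≤ c - h then μ₁
      else if t ≤ c then h * μ₁ * μ₂ / ((c - t) * μ₂ + (t + h - c) * μ₁)
      else μ₂)
    (hmarg : ∀ t ∈ Set.Icc (0 : ℝ) (T - h), ∀ᵐ ω ∂P, Tendsto
      (fun n : ℕ =>
        (((Nn n ((n : ℝ) * (t + h)) ω : ℝ) - (Nn n ((n : ℝ) * t) ω : ℝ)) / ((n : ℝ) * h)))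
      atTop (nhds (1 / muri t))) :
    ∀ᵐ ω ∂P, TendstoUniformlyOn
      (fun (n : ℕ) (t : ℝ) =>
        (((Nn n ((n : ℝ) * (t + h)) ω : ℝ) - (Nn n ((n : ℝ) * t) ω : ℝ)) / ((n : ℝ) * h)))
      (fun t => 1 / muri t) atTop (Set.Icc 0 (T - h)) :=
  compound_counting_uniform_slln_general P ξ₁ ξ₂ hmeas₁ hmeas₂ hindep hident₁ hident₂ μ₁ μ₂ hμ₁ hμ₂
    hmean₁ hmean₂ hL2₁ hL2₂ S₁ S₂ hS₁ hS₂ N₁ N₂ hN₁ hN₂ T c h hc hh Nn hNn muri hmuri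
end
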